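/- arXiv:1904.07368 — 5 statements merged into one kernel-verified Lean document; each statement's English description precedes it below -/
import Mathlib

section
/- Let f : ℝ → ℝ be a probability density that is unimodal with center μ (i.e., f is non-decreasing on (-∞, μ], non-increasing on [μ, ∞), and f(μ+c) = f(μ-c) for all c). Let g(x,u) = exp(-λ((x-u)² + h²)^(r/2)) with λ > 0, h ≥ 0, r ≥ 1. Then for every u ∈ ℝ, ∫ g(x,μ) f(x) dx ≥ ∫ g(x,u) f(x) dx; i.e., u = μ maximizes u ↦ ∫ g(x,u) f(x) dx. -/
/-!
The reflection `σ x = μ + u - x` preserves Lebesgue measure and swaps the distances `|x - μ|` and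
`|x - u|`. Substituting `σ` in both integrals turns twice the difference
`∫ g(x,μ) f(x) dx - ∫ g(x,u) f(x) dx` into `∫ (g(x,μ) - g(x,u)) (f x - f (σ x)) dx`.
The kernel `g(·,v)` and the density `f` both decrease with the distance to their centres, so the
two factors always have the same sign and the integrand is nonnegative.
-/

open Real MeasureTheory

def RadiallyAntitone {E : Type*} [SeminormedAddCommGroup E] (φ : E → ℝ) (c : E) : Prop :=
  ∀ ⦃a b : E⦄, ‖a - c‖ ≤ ‖b - c‖ → φ b ≤ φ a

namespace RadiallyAntitone

variable {E : Type*} [SeminormedAddCommGroup E]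

theorem comp_neg {G : E → ℝ} (hG : RadiallyAntitone G 0) (a : E) : G (-a) = G a :=
  le_antisymm (hG (by simp)) (hG (by simp))

theorem mul_sub_reflect_nonneg {G f : E → ℝ} {μ : E} (hG : RadiallyAntitone G 0)
    (hf : RadiallyAntitone f μ) (u x : E) :
    0 ≤ (G (x - μ) - G (x - u)) * (f x - f (μ + u - x)) := by
  have hdist : ‖μ + u - x - μ‖ = ‖x - u‖ := by
    rw [show μ + u - x - μ = -(x - u) by abel, norm_neg]
  rcases le_total ‖x - μ‖ ‖x - u‖ with hle | hle
  · exact mul_nonneg (sub_nonneg.2 (hG (by simpa using hle)))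
      (sub_nonneg.2 (hf (by rwa [hdist])))
  · exact mul_nonneg_of_nonpos_of_nonpos (sub_nonpos.2 (hG (by simpa using hle)))
      (sub_nonpos.2 (hf (by rwa [hdist])))

end RadiallyAntitone

section Reflection

variable {E : Type*} [NormedAddCommGroup E] [MeasurableSpace E] [MeasurableAdd E] [MeasurableNeg E]
  {ν : Measure E} [ν.IsAddLeftInvariant] [ν.IsNegInvariant] {G f : E → ℝ}

theorem integral_comp_sub_mul_eq_reflect (hG : ∀ a, G (-a) = G a) (v w : E) :
    ∫ x, G (x - v) * f x ∂ν = ∫ x, G (x - w) * f (v + w - x) ∂ν := by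
  rw [← integral_sub_left_eq_self _ ν (v + w)]
  congr 1 with x
  rw [show v + w - x - v = -(x - w) by abel, hG]

theorem MeasureTheory.Integrable.comp_sub_mul_reflect (hG : ∀ a, G (-a) = G a) {v : E}
    (hv : Integrable (fun x => G (x - v) * f x) ν) (w : E) :
    Integrable (fun x => G (x - w) * f (v + w - x)) ν := by
  refine (hv.comp_sub_left (v + w)).congr (Filter.Eventually.of_forall fun x => ?_)
  simp only [show v + w - x - v = -(x - w) by abel, hG]

theorem integral_comp_sub_mul_le_of_radiallyAntitone (hG : RadiallyAntitone G 0) {μ : E}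
    (hf : RadiallyAntitone f μ) (u : E) (hμ : Integrable (fun x => G (x - μ) * f x) ν)
    (hu : Integrable (fun x => G (x - u) * f x) ν) :
    ∫ x, G (x - u) * f x ∂ν ≤ ∫ x, G (x - μ) * f x ∂ν := by
  have hμ' := hμ.comp_sub_mul_reflect hG.comp_neg u
  have hu' := hu.comp_sub_mul_reflect hG.comp_neg μ
  have htwice : 2 * (∫ x, G (x - μ) * f x ∂ν - ∫ x, G (x - u) * f x ∂ν) =
      ∫ x, (G (x - μ) - G (x - u)) * (f x - f (μ + u - x)) ∂ν := by
    calc 2 * (∫ x, G (x - μ) * f x ∂ν - ∫ x, G (x - u) * f x ∂ν)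
        = (∫ x, G (x - μ) * f x ∂ν + ∫ x, G (x - u) * f (μ + u - x) ∂ν)
          - (∫ x, G (x - u) * f x ∂ν + ∫ x, G (x - μ) * f (u + μ - x) ∂ν) := by
          rw [← integral_comp_sub_mul_eq_reflect hG.comp_neg μ u,
            ← integral_comp_sub_mul_eq_reflect hG.comp_neg u μ]
          ring
      _ = ∫ x, (G (x - μ) * f x + G (x - u) * f (μ + u - x))
            - (G (x - u) * f x + G (x - μ) * f (u + μ - x)) ∂ν := by
          have hμμ' : Integrable (fun x => G (x - μ) * f x + G (x - u) * f (μ + u - x)) ν :=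
            hμ.add hμ'
          have huu' : Integrable (fun x => G (x - u) * f x + G (x - μ) * f (u + μ - x)) ν :=
            hu.add hu'
          rw [integral_sub hμμ' huu', integral_add hμ hμ', integral_add hu hu']
      _ = ∫ x, (G (x - μ) - G (x - u)) * (f x - f (μ + u - x)) ∂ν := by
          congr 1 with x
          rw [add_comm u μ]
          ring
  have hnonneg : 0 ≤ ∫ x, (G (x - μ) - G (x - u)) * (f x - f (μ + u - x)) ∂ν :=
    integral_nonneg fun x => hG.mul_sub_reflect_nonneg hf u x
  linarith

end Reflection

theorem radiallyAntitone_of_antitoneOn_of_symm {f : ℝ → ℝ} {μ : ℝ}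
    (hanti : AntitoneOn f (Set.Ici μ)) (hsym : ∀ c : ℝ, f (μ + c) = f (μ - c)) :
    RadiallyAntitone f μ := by
  have hfold : ∀ a, f a = f (μ + |a - μ|) := by
    intro a
    rcases le_total μ a with hle | hle
    · rw [abs_of_nonneg (sub_nonneg.2 hle), add_sub_cancel]
    · rw [abs_of_nonpos (sub_nonpos.2 hle), hsym, sub_neg_eq_add, add_sub_cancel]
  intro a b hab
  rw [hfold a, hfold b]
  exact hanti (by simp) (by simp) (by simpa using hab)

theorem radiallyAntitone_exp_neg_mul_rpow {lam r : ℝ} (hlam : 0 ≤ lam) (hr : 0 ≤ r) (h : ℝ) :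
    RadiallyAntitone (fun s : ℝ => exp (-lam * (s ^ 2 + h ^ 2) ^ (r / 2))) 0 := by
  intro a b hab
  simp only [sub_zero, Real.norm_eq_abs] at hab
  have hsq : a ^ 2 + h ^ 2 ≤ b ^ 2 + h ^ 2 := add_le_add_left (sq_le_sq.2 hab) _
  have hpow := Real.rpow_le_rpow (by positivity) hsq (div_nonneg hr zero_le_two)
  exact exp_le_exp.2 (by nlinarith)

theorem MeasureTheory.Integrable.exp_neg_mul_rpow_mul {f : ℝ → ℝ} (hf : Integrable f) {lam : ℝ}
    (hlam : 0 ≤ lam) (h r v : ℝ) : Integrable (fun x => exp (-lam * ((x - v) ^ 2 + h ^ 2) ^ (r / 2)) * f x) := by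
  refine hf.bdd_mul (c := 1) (by fun_prop : Measurable _).aestronglyMeasurable
    (Filter.Eventually.of_forall fun x => ?_)
  have hpow : 0 ≤ ((x - v) ^ 2 + h ^ 2) ^ (r / 2) := Real.rpow_nonneg (by positivity) _
  rw [Real.norm_eq_abs, abs_of_pos (exp_pos _), exp_le_one_iff]
  nlinarith

theorem stmt_0_general (f : ℝ → ℝ) (μ lam h r : ℝ)
    (hlam : 0 < lam) (hr : 1 ≤ r)
    (hf1 : ∫ x, f x = 1)
    (hanti : AntitoneOn f (Set.Ici μ))
    (hsym : ∀ c : ℝ, f (μ + c) = f (μ - c)) :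
    ∀ u : ℝ,
      ∫ x, Real.exp (-lam * (((x - u) ^ 2 + h ^ 2) ^ (r / 2))) * f x ≤
        ∫ x, Real.exp (-lam * (((x - μ) ^ 2 + h ^ 2) ^ (r / 2))) * f x := by
  intro u
  have hf := integrable_of_integral_eq_one hf1
  exact integral_comp_sub_mul_le_of_radiallyAntitone
    (radiallyAntitone_exp_neg_mul_rpow hlam.le (zero_le_one.trans hr) h)
    (radiallyAntitone_of_antitoneOn_of_symm hanti hsym) u
    (hf.exp_neg_mul_rpow_mul hlam.le h r μ) (hf.exp_neg_mul_rpow_mul hlam.le h r u)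

/-- For a unimodal density `f` with center `μ`, the center `μ`
maximizes `u ↦ ∫ g(x,u) f(x) dx` where `g(x,u) = exp(-λ((x-u)²+h²)^(r/2))`. -/
theorem stmt_0 (f : ℝ → ℝ) (μ lam h r : ℝ)
    (hlam : 0 < lam) (hh : 0 ≤ h) (hr : 1 ≤ r)
    (hf0 : ∀ x, 0 ≤ f x) (hf1 : ∫ x, f x = 1)
    (hmono : MonotoneOn f (Set.Iic μ)) (hanti : AntitoneOn f (Set.Ici μ))
    (hsym : ∀ c : ℝ, f (μ + c) = f (μ - c)) :
    ∀ u : ℝ,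
      ∫ x, Real.exp (-lam * (((x - u) ^ 2 + h ^ 2) ^ (r / 2))) * f x ≤
        ∫ x, Real.exp (-lam * (((x - μ) ^ 2 + h ^ 2) ^ (r / 2))) * f x :=
  stmt_0_general f μ lam h r hlam hr hf1 hanti hsym
end

section
/- Let f be the uniform density on [0,M] ⊂ ℝ, h = 0, λ > 0, r ≥ 1. There exists a constant c > 0 (depending on M, λ, r but not on n) such that for every n ≥ 1 and every deployment u₁,…,uₙ ∈ ℝ, ∫₀^M ∏_{i=1}^n (1 - exp(-λ|x-uᵢ|^r)) dx/M ≥ cⁿ. -/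
/-!
Write each factor as `exp (-φ (u i) x)` with `φ u x = -log (1 - exp (-λ |x - u| ^ r))`.
By Jensen's inequality for `exp`, the average over `[0, M]` of `exp (-∑ i, φ (u i) x)` is at
least `exp (-∑ i, ⨍ φ (u i))`, so it suffices to bound `⨍ φ u` independently of `u`.
The singularity of `φ u` at `u` is integrable: `-log (1 - exp (-s)) ≤ 1 + s ^ (-p) / p`, and
`p = 1 / (2r)` gives `φ u x ≤ 1 + C |x - u| ^ (-1/2)`. Moving `u` to the nearest point of
`[0, M]` only increases the integral of `|x - u| ^ (-1/2)` over `[0, M]`, which is then at most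
the integral of `|y| ^ (-1/2)` over `[-M, M]`.
-/

open Real MeasureTheory Set

lemma exp_neg_one_mul_min_le_one_sub_exp_neg {s : ℝ} (hs : 0 ≤ s) :
    exp (-1) * min s 1 ≤ 1 - exp (-s) := by
  rcases le_total s 1 with h | h
  · rw [min_eq_left h]
    -- `1 - exp (-s) = exp (-s) * (exp s - 1) ≥ exp (-1) * s`
    have h1 : s + 1 ≤ exp s := add_one_le_exp s
    have h2 : exp (-1) ≤ exp (-s) := exp_le_exp.2 (by linarith)
    have h3 : exp (-s) * exp s = 1 := by rw [← exp_add]; simp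
    nlinarith [mul_le_mul_of_nonneg_right h2 hs, mul_le_mul_of_nonneg_left h1 (exp_pos (-s)).le]
  · rw [min_eq_right h, mul_one]
    have h1 : exp (-s) ≤ exp (-1) := exp_le_exp.2 (by linarith)
    have h2 : exp (-1) ≤ 1 / 2 := by
      rw [exp_neg, inv_le_comm₀ (exp_pos 1) (by norm_num)]
      linarith [add_one_le_exp (1 : ℝ)]
    linarith

lemma neg_log_one_sub_exp_neg_le {s p : ℝ} (hs : 0 < s) (hp : 0 < p) :
    -log (1 - exp (-s)) ≤ 1 + s ^ (-p) / p := by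
  have hmin : 0 < min s 1 := lt_min hs one_pos
  have hlower : -log (1 - exp (-s)) ≤ 1 - log (min s 1) := by
    have := log_le_log (by positivity) (exp_neg_one_mul_min_le_one_sub_exp_neg hs.le)
    rw [log_mul (exp_pos _).ne' hmin.ne', log_exp] at this
    linarith
  have hlog : -log (min s 1) ≤ s ^ (-p) / p := by
    rcases le_total s 1 with h | h
    · rw [min_eq_left h, ← log_inv, rpow_neg hs.le, ← inv_rpow hs.le]
      exact log_le_rpow_div (inv_nonneg.2 hs.le) hp
    · rw [min_eq_right h, log_one, neg_zero]
      positivity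
  linarith

section absRpow

variable {q : ℝ}

lemma intervalIntegrable_abs_rpow (hq : -1 < q) (a b : ℝ) :
    IntervalIntegrable (fun x => |x| ^ q) volume a b := by
  have hpos : ∀ c, 0 ≤ c → IntervalIntegrable (fun x => |x| ^ q) volume 0 c := fun c hc =>
    (intervalIntegral.intervalIntegrable_rpow' hq).congr fun x hx => by
      rw [uIoc_of_le hc] at hx
      simp [abs_of_pos hx.1]
  have h0 : ∀ c, IntervalIntegrable (fun x => |x| ^ q) volume 0 c := by
    intro c
    rcases le_total 0 c with hc | hc
    · exact hpos c hc
    · rw [IntervalIntegrable.iff_comp_neg]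
      simpa using hpos (-c) (by linarith)
  exact (h0 a).symm.trans (h0 b)

lemma intervalIntegrable_abs_sub_rpow (hq : -1 < q) (u a b : ℝ) :
    IntervalIntegrable (fun x => |x - u| ^ q) volume a b := by
  simpa using (intervalIntegrable_abs_rpow hq (a - u) (b - u)).comp_sub_right u

lemma integral_abs_sub_rpow_le (hq : -1 < q) (hq0 : q ≤ 0) {a b : ℝ} (hab : a ≤ b) (u : ℝ) :
    ∫ x in a..b, |x - u| ^ q ≤ ∫ y in -(b - a)..(b - a), |y| ^ q := by
  -- moving `u` to its nearest point `v` of `[a, b]` brings it closer to every point of `[a, b]`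
  set v := max a (min u b)
  have hav : a ≤ v := le_max_left _ _
  have hvb : v ≤ b := max_le hab (min_le_right _ _)
  have hcloser : ∀ x ∈ Icc a b, x ≠ v → |x - u| ^ q ≤ |x - v| ^ q := fun x hx hxv =>
    rpow_le_rpow_of_nonpos (abs_sub_pos.2 hxv) (by grind) hq0
  calc ∫ x in a..b, |x - u| ^ q ≤ ∫ x in a..b, |x - v| ^ q := by
        refine intervalIntegral.integral_mono_ae_restrict hab
          (intervalIntegrable_abs_sub_rpow hq u a b) (intervalIntegrable_abs_sub_rpow hq v a b) ?_
        filter_upwards [ae_restrict_mem measurableSet_Icc,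
          ae_restrict_of_ae (Measure.ae_ne volume v)] with x hx hxv using hcloser x hx hxv
    _ = ∫ y in (a - v)..(b - v), |y| ^ q :=
        intervalIntegral.integral_comp_sub_right (fun y => |y| ^ q) v
    _ ≤ ∫ y in -(b - a)..(b - a), |y| ^ q :=
        intervalIntegral.integral_mono_interval (by linarith) (by linarith) (by linarith)
          (ae_of_all _ fun y => rpow_nonneg (abs_nonneg y) q) (intervalIntegrable_abs_rpow hq _ _)

end absRpow

/-- `-log` of the probability that the UAV at `u` fails to cover the terminal at `x`. -/
noncomputable def outageExponent (lam r u x : ℝ) : ℝ :=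
  -log (1 - exp (-lam * |x - u| ^ r))

section outageExponent

variable {lam r : ℝ}

lemma outageExponent_nonneg (hlam : 0 ≤ lam) (u x : ℝ) : 0 ≤ outageExponent lam r u x := by
  have hle : exp (-lam * |x - u| ^ r) ≤ 1 :=
    exp_le_one_iff.2 (by have := rpow_nonneg (abs_nonneg (x - u)) r; nlinarith)
  exact neg_nonneg.2 (log_nonpos (by linarith) (by linarith [exp_pos (-lam * |x - u| ^ r)]))

lemma exp_neg_outageExponent (hlam : 0 < lam) {u x : ℝ} (hx : x ≠ u) :
    exp (-outageExponent lam r u x) = 1 - exp (-lam * |x - u| ^ r) := by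
  have hpos : 0 < lam * |x - u| ^ r := mul_pos hlam (rpow_pos_of_pos (abs_sub_pos.2 hx) r)
  rw [outageExponent, neg_neg, exp_log (by rw [sub_pos, neg_mul, exp_lt_one_iff]; linarith)]

lemma measurable_outageExponent (lam r u : ℝ) : Measurable (outageExponent lam r u) := by
  unfold outageExponent
  fun_prop

lemma outageExponent_le (hlam : 0 < lam) (hr : 0 < r) (u x : ℝ) :
    outageExponent lam r u x ≤
      1 + 2 * r * lam ^ (-(1 / (2 * r))) * |x - u| ^ (-(1 / 2) : ℝ) := by
  rcases eq_or_ne x u with rfl | hx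
  · simp [outageExponent, zero_rpow hr.ne']
  have ht : 0 < |x - u| := abs_sub_pos.2 hx
  have hp : 0 < 1 / (2 * r) := by positivity
  -- the exponent `1 / (2r)` turns `(λ t ^ r) ^ (-1/(2r))` into a multiple of `t ^ (-1/2)`
  have hpow : (lam * |x - u| ^ r) ^ (-(1 / (2 * r))) / (1 / (2 * r)) =
      2 * r * lam ^ (-(1 / (2 * r))) * |x - u| ^ (-(1 / 2) : ℝ) := by
    rw [mul_rpow hlam.le (rpow_nonneg ht.le r), ← rpow_mul ht.le,
      show r * -(1 / (2 * r)) = -(1 / 2) by field_simp]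
    field_simp
  have := neg_log_one_sub_exp_neg_le (mul_pos hlam (rpow_pos_of_pos ht r)) hp
  rwa [hpow, ← neg_mul] at this

lemma intervalIntegrable_outageExponent (hlam : 0 < lam) (hr : 0 < r) (u a b : ℝ) :
    IntervalIntegrable (outageExponent lam r u) volume a b := by
  have hbound : IntervalIntegrable
      (fun x => 1 + 2 * r * lam ^ (-(1 / (2 * r))) * |x - u| ^ (-(1 / 2) : ℝ)) volume a b :=
    intervalIntegrable_const.add
      ((intervalIntegrable_abs_sub_rpow (by norm_num) u a b).const_mul _)
  refine hbound.mono_fun' (measurable_outageExponent lam r u).aestronglyMeasurable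
    (ae_of_all _ fun x => ?_)
  dsimp only
  rw [Real.norm_eq_abs, abs_of_nonneg (outageExponent_nonneg hlam.le u x)]
  exact outageExponent_le hlam hr u x

lemma setIntegral_outageExponent_le (hlam : 0 < lam) (hr : 0 < r) {M : ℝ} (hM : 0 ≤ M)
    (u : ℝ) :
    ∫ x in Icc 0 M, outageExponent lam r u x ≤
      M + 2 * r * lam ^ (-(1 / (2 * r))) * ∫ y in -M..M, |y| ^ (-(1 / 2) : ℝ) := by
  set C := 2 * r * lam ^ (-(1 / (2 * r)))
  have hpow := intervalIntegrable_abs_sub_rpow (q := -(1 / 2)) (by norm_num) u 0 M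
  calc ∫ x in Icc 0 M, outageExponent lam r u x
      = ∫ x in 0..M, outageExponent lam r u x := by
        rw [intervalIntegral.integral_of_le hM, integral_Icc_eq_integral_Ioc]
    _ ≤ ∫ x in 0..M, (1 + C * |x - u| ^ (-(1 / 2) : ℝ)) :=
        intervalIntegral.integral_mono_on hM (intervalIntegrable_outageExponent hlam hr u 0 M)
          (intervalIntegrable_const.add (hpow.const_mul C))
          fun x _ => outageExponent_le hlam hr u x
    _ = M + C * ∫ x in 0..M, |x - u| ^ (-(1 / 2) : ℝ) := by
        rw [intervalIntegral.integral_add intervalIntegrable_const (hpow.const_mul C),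
          intervalIntegral.integral_const_mul]
        simp
    _ ≤ M + C * ∫ y in -M..M, |y| ^ (-(1 / 2) : ℝ) := by
        gcongr
        simpa using integral_abs_sub_rpow_le (q := -(1 / 2)) (by norm_num) (by norm_num) hM u

end outageExponent

lemma exp_neg_pow_card_le_average_prod_exp_neg {α ι : Type*} [MeasurableSpace α] [Fintype ι]
    {μ : Measure α} [IsFiniteMeasure μ] [NeZero μ] {φ : ι → α → ℝ} {K : ℝ}
    (hφ : ∀ i, Integrable (φ i) μ) (hφ0 : ∀ i, 0 ≤ᵐ[μ] φ i)
    (hK : ∀ i, ⨍ x, φ i x ∂μ ≤ K) :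
    exp (-K) ^ Fintype.card ι ≤ ⨍ x, ∏ i, exp (-φ i x) ∂μ := by
  set S := fun x => ∑ i, φ i x
  have hS : Integrable S μ := integrable_finsetSum _ fun i _ => hφ i
  have hS0 : 0 ≤ᵐ[μ] S := by
    filter_upwards [ae_all_iff.2 hφ0] with x hx using Finset.sum_nonneg fun i _ => hx i
  have hexpS : Integrable (fun x => exp (-S x)) μ :=
    Integrable.of_bound (continuous_exp.comp_aestronglyMeasurable hS.neg.aestronglyMeasurable) 1
      (by filter_upwards [hS0] with x hx; simpa [abs_of_pos (exp_pos _)] using hx)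
  have havgS : ⨍ x, S x ∂μ = ∑ i, ⨍ x, φ i x ∂μ := by
    simp only [S, average_eq, smul_eq_mul, integral_finsetSum _ fun i _ => hφ i, Finset.mul_sum]
  calc exp (-K) ^ Fintype.card ι = exp (-(Fintype.card ι * K)) := by
        rw [← exp_nat_mul]; ring_nf
    _ ≤ exp (⨍ x, -S x ∂μ) := by
        rw [average_neg, havgS]
        gcongr
        simpa using Finset.sum_le_sum fun i (_ : i ∈ Finset.univ) => hK i
    _ ≤ ⨍ x, exp (-S x) ∂μ :=
        convexOn_exp.map_average_le continuousOn_exp isClosed_univ (by simp) hS.neg hexpS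
    _ = ⨍ x, ∏ i, exp (-φ i x) ∂μ := by simp [S, ← exp_sum]

/-- For the uniform density on `[0,M]` at altitude `h = 0`, there is a
constant `c > 0` independent of `n` such that every deployment of `n ≥ 1` UAVs has
outage probability at least `cⁿ`. -/
theorem stmt_5 (M lam r : ℝ) (hM : 0 < M) (hlam : 0 < lam) (hr : 1 ≤ r) :
    ∃ c : ℝ, 0 < c ∧
      ∀ n : ℕ, 1 ≤ n → ∀ u : Fin n → ℝ,
        c ^ n ≤ (1 / M) * ∫ x in Set.Icc (0 : ℝ) M,
          ∏ i, (1 - Real.exp (-lam * |x - u i| ^ r)) := by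
  have hr0 : 0 < r := by linarith
  set K := M + 2 * r * lam ^ (-(1 / (2 * r))) * ∫ y in -M..M, |y| ^ (-(1 / 2) : ℝ)
  refine ⟨exp (-(K / M)), exp_pos _, fun n _ u => ?_⟩
  set μ := volume.restrict (Icc 0 M)
  have hμ : μ.real univ = M := by simp [μ, hM.le]
  have : NeZero μ := ⟨fun h => by simp [h] at hμ; linarith⟩
  have havg (g : ℝ → ℝ) : ⨍ x, g x ∂μ = 1 / M * ∫ x in Icc 0 M, g x := by
    rw [average_eq, hμ, smul_eq_mul, one_div]
  have key := exp_neg_pow_card_le_average_prod_exp_neg (μ := μ) (K := K / M)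
    (φ := fun i => outageExponent lam r (u i))
    (fun i => (intervalIntegrable_iff_integrableOn_Icc_of_le hM.le).1
      (intervalIntegrable_outageExponent hlam hr0 (u i) 0 M))
    (fun i => ae_of_all _ fun x => outageExponent_nonneg hlam.le (u i) x)
    (fun i => by
      rw [havg, one_div_mul_eq_div]
      gcongr
      exact setIntegral_outageExponent_le hlam hr0 hM.le (u i))
  rw [Fintype.card_fin, havg] at key
  refine key.trans_eq (congrArg _ (integral_congr_ae ?_))
  -- at the points `u i` the identity fails because of the junk value `log 0 = 0`
  filter_upwards [ae_restrict_of_ae ((finite_range u).countable.ae_notMem volume)] with x hx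
  exact Finset.prod_congr rfl fun i _ => exp_neg_outageExponent hlam fun h => hx ⟨i, h.symm⟩
end

section
/- Let λ > 0 and r > 1. The function g(x) = 1 - exp(-λ x^r / 3^r) is convex on the interval [0, 3 λ^{-1/r} (1 - 1/r)^{1/r}], and consequently x ↦ x·(1 - exp(-λ x^r/3^r))ⁿ is convex on the same interval for every n ≥ 1. -/
open Real Set

/-! With `a = λ / 3^r`, `g x = 1 - exp (-a x^r)` has
`g'' x = a r x^(r-2) exp (-a x^r) (r - 1 - a r x^r)`, which is nonnegative up to the inflection
point `a r x^r = r - 1`; this point is exactly the right endpoint `3 λ^(-1/r) (1 - 1/r)^(1/r)`.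
On `[0, ∞)` both `id` and `gⁿ` are nonnegative, monotone and convex, hence so is their product. -/

section

variable {a r : ℝ}

theorem hasDerivAt_one_sub_exp_neg_mul_rpow (hr : 1 ≤ r) (x : ℝ) :
    HasDerivAt (fun x => 1 - exp (-a * x ^ r)) (a * r * x ^ (r - 1) * exp (-a * x ^ r)) x := by
  have h := (((hasDerivAt_rpow_const (x := x) (Or.inr hr)).const_mul (-a)).exp).const_sub 1
  refine h.congr_deriv ?_
  ring

theorem hasDerivAt_mul_rpow_mul_exp_neg_mul_rpow {x : ℝ} (hx : 0 < x) :
    HasDerivAt (fun x => a * r * x ^ (r - 1) * exp (-a * x ^ r))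
      (a * r * x ^ (r - 2) * exp (-a * x ^ r) * (r - 1 - a * r * x ^ r)) x := by
  have hpow (p : ℝ) : HasDerivAt (fun x => x ^ p) (p * x ^ (p - 1)) x :=
    hasDerivAt_rpow_const (Or.inl hx.ne')
  have h := ((hpow (r - 1)).const_mul (a * r)).mul ((hpow r).const_mul (-a)).exp
  refine h.congr_deriv ?_
  have hsq : x ^ (r - 1) * x ^ (r - 1) = x ^ (r - 2) * x ^ r := by
    rw [← rpow_add hx, ← rpow_add hx]; ring_nf
  rw [show r - 1 - 1 = r - 2 by ring]
  linear_combination -(a ^ 2 * r ^ 2 * exp (-a * x ^ r)) * hsq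

theorem one_sub_exp_neg_mul_rpow_nonneg (ha : 0 ≤ a) {x : ℝ} (hx : 0 ≤ x) :
    0 ≤ 1 - exp (-a * x ^ r) := by
  have : -a * x ^ r ≤ 0 := by
    have := rpow_nonneg hx r
    nlinarith
  linarith [exp_le_one_iff.2 this]

theorem monotoneOn_one_sub_exp_neg_mul_rpow (ha : 0 ≤ a) (hr : 0 ≤ r) :
    MonotoneOn (fun x => 1 - exp (-a * x ^ r)) (Ici 0) := by
  intro x hx y _ hxy
  have := mul_le_mul_of_nonneg_left (rpow_le_rpow hx hxy hr) ha
  simp only [neg_mul, sub_le_sub_iff_left, exp_le_exp, neg_le_neg_iff]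
  exact this

theorem convexOn_one_sub_exp_neg_mul_rpow (ha : 0 ≤ a) (hr : 1 ≤ r) {c : ℝ}
    (hc : a * r * c ^ r ≤ r - 1) :
    ConvexOn ℝ (Icc 0 c) (fun x => 1 - exp (-a * x ^ r)) := by
  have hderiv := hasDerivAt_one_sub_exp_neg_mul_rpow (a := a) hr
  refine convexOn_of_hasDerivWithinAt2_nonneg (convex_Icc 0 c)
    (f'' := fun x => a * r * x ^ (r - 2) * exp (-a * x ^ r) * (r - 1 - a * r * x ^ r))
    (fun x _ => (hderiv x).continuousAt.continuousWithinAt)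
    (fun x _ => (hderiv x).hasDerivWithinAt) ?_ ?_
  · rw [interior_Icc]
    exact fun x hx => (hasDerivAt_mul_rpow_mul_exp_neg_mul_rpow hx.1).hasDerivWithinAt
  · rw [interior_Icc]
    rintro x ⟨hx₀, hxc⟩
    have hxr : a * r * x ^ r ≤ a * r * c ^ r := by gcongr
    have : 0 ≤ r - 1 - a * r * x ^ r := by linarith
    positivity

end

theorem ConvexOn.id_mul {s : Set ℝ} {f : ℝ → ℝ} (hs : s ⊆ Ici 0) (hf : ConvexOn ℝ s f)
    (hf_mono : MonotoneOn f s) (hf_nonneg : ∀ x ∈ s, 0 ≤ f x) :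
    ConvexOn ℝ s (fun x => x * f x) :=
  (convexOn_id hf.1).mul hf hs hf_nonneg (monotoneOn_id.monovaryOn hf_mono)

/-- `g(x) = 1 - exp(-λx^r/3^r)` is convex on
`[0, 3λ^{-1/r}(1-1/r)^{1/r}]`, and so is `x ↦ x·g(x)ⁿ` for every `n ≥ 1`. -/
theorem stmt_7 (lam r : ℝ) (hlam : 0 < lam) (hr : 1 < r) :
    ConvexOn ℝ (Set.Icc 0 (3 * lam ^ (-(1 / r)) * (1 - 1 / r) ^ (1 / r)))
      (fun x : ℝ => 1 - Real.exp (-lam * x ^ r / 3 ^ r)) ∧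
    ∀ n : ℕ, 1 ≤ n →
      ConvexOn ℝ (Set.Icc 0 (3 * lam ^ (-(1 / r)) * (1 - 1 / r) ^ (1 / r)))
        (fun x : ℝ => x * (1 - Real.exp (-lam * x ^ r / 3 ^ r)) ^ n) := by
  set c := 3 * lam ^ (-(1 / r)) * (1 - 1 / r) ^ (1 / r)
  have hscale (x : ℝ) : -lam * x ^ r / 3 ^ r = -(lam / 3 ^ r) * x ^ r := by ring
  simp only [hscale]
  have ha : 0 ≤ lam / 3 ^ r := by positivity
  have hr0 : 0 < r := by linarith
  have hs : 0 < 1 - 1 / r := by rw [sub_pos, div_lt_one hr0]; exact hr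
  have hc : lam / 3 ^ r * r * c ^ r = r - 1 := by
    rw [mul_rpow (by positivity) (by positivity), mul_rpow (by norm_num) (by positivity),
      ← rpow_mul hlam.le, ← rpow_mul hs.le, neg_mul, one_div_mul_cancel hr0.ne', rpow_neg_one,
      rpow_one]
    field_simp
  have hconv := convexOn_one_sub_exp_neg_mul_rpow ha hr.le hc.le
  have hsub : Icc 0 c ⊆ Ici 0 := Icc_subset_Ici_self
  refine ⟨hconv, fun n _ => ?_⟩
  have hnonneg x (hx : x ∈ Icc 0 c) := one_sub_exp_neg_mul_rpow_nonneg (r := r) ha hx.1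
  have hmono := (monotoneOn_one_sub_exp_neg_mul_rpow ha hr0.le).mono hsub
  exact ConvexOn.id_mul hsub (hconv.pow hnonneg n)
    (fun x hx y hy hxy => pow_le_pow_left₀ (hnonneg x hx) (hmono hx hy hxy) n)
    (fun x hx => pow_nonneg (hnonneg x hx) n)
end

section
/- Let λ > 0, r > 0, h ≥ 0, and g(x,u) = exp(-λ(‖x-u‖²+h²)^(r/2)). For any probability density f on ℝ^d, any n ≥ 1, and any deployment (u₁,…,uₙ), the outage probability satisfies |P_O(U) - (1 - Σᵢ ∫ g(x,uᵢ) f(x) dx)| ≤ 2ⁿ e^{-2λ h^r}, where P_O(U) = ∫ ∏ᵢ(1 - g(x,uᵢ)) f(x) dx. -/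
/-!
Since every UAV is at height `h`, each coverage probability `tᵢ = g(x, uᵢ)` lies in
`[0, ε]` with `ε = e^{-λ h^r} ≤ 1`. For such numbers the product `∏ (1 - tᵢ)` differs from its
linearisation `1 - ∑ tᵢ` by at most `2ⁿ ε²`: peeling off one factor writes the new error as
`(1 - t) · (old error) + t · ∑ tᵢ`, and the second term is `O(ε²)`. Integrating this pointwise
bound against the probability density `f` gives the theorem.
-/

open Real MeasureTheory

theorem abs_prod_one_sub_sub_one_sub_sum_le {ι : Type*} (s : Finset ι) {t : ι → ℝ} {ε : ℝ}
    (ht : ∀ i ∈ s, t i ∈ Set.Icc 0 ε) (hε : ε ≤ 1) :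
    |∏ i ∈ s, (1 - t i) - (1 - ∑ i ∈ s, t i)| ≤ 2 ^ s.card * ε ^ 2 := by
  classical
  induction s using Finset.induction_on with
  | empty => simpa using sq_nonneg ε
  | @insert a s ha ih =>
    have hta := ht a (Finset.mem_insert_self a s)
    have hts : ∀ i ∈ s, t i ∈ Set.Icc 0 ε := fun i hi => ht i (Finset.mem_insert_of_mem hi)
    have hsum_nonneg : 0 ≤ ∑ i ∈ s, t i := Finset.sum_nonneg fun i hi => (hts i hi).1
    have hsum_le : ∑ i ∈ s, t i ≤ s.card * ε := by
      simpa using Finset.sum_le_sum fun i hi => (hts i hi).2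
    have hcard : (s.card : ℝ) ≤ 2 ^ s.card := by exact_mod_cast (Nat.lt_two_pow_self).le
    rw [Finset.prod_insert ha, Finset.sum_insert ha, Finset.card_insert_of_notMem ha, pow_succ]
    calc |(1 - t a) * ∏ i ∈ s, (1 - t i) - (1 - (t a + ∑ i ∈ s, t i))|
        = |(1 - t a) * (∏ i ∈ s, (1 - t i) - (1 - ∑ i ∈ s, t i)) + t a * ∑ i ∈ s, t i| := by
          ring_nf
      _ ≤ 1 * (2 ^ s.card * ε ^ 2) + ε * (s.card * ε) := by
          refine (abs_add_le _ _).trans (add_le_add ?_ ?_)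
          · rw [abs_mul]
            exact mul_le_mul (abs_le.2 ⟨by linarith [hta.2], by linarith [hta.1]⟩) (ih hts)
              (abs_nonneg _) zero_le_one
          · rw [abs_of_nonneg (mul_nonneg hta.1 hsum_nonneg)]
            exact mul_le_mul hta.2 hsum_le hsum_nonneg (hta.1.trans hta.2)
      _ ≤ 2 ^ s.card * 2 * ε ^ 2 := by nlinarith [sq_nonneg ε]

theorem abs_integral_prod_one_sub_mul_sub_le {α ι : Type*} [MeasurableSpace α] [Fintype ι]
    {μ : Measure α} {g : ι → α → ℝ} {f : α → ℝ} {ε : ℝ}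
    (hgm : ∀ i, AEStronglyMeasurable (g i) μ) (hg : ∀ i x, g i x ∈ Set.Icc 0 ε) (hε : ε ≤ 1)
    (hf0 : ∀ x, 0 ≤ f x) (hf1 : ∫ x, f x ∂μ = 1) :
    |∫ x, (∏ i, (1 - g i x)) * f x ∂μ - (1 - ∑ i, ∫ x, g i x * f x ∂μ)|
      ≤ 2 ^ Fintype.card ι * ε ^ 2 := by
  have hf : Integrable f μ := Integrable.of_integral_ne_zero (by rw [hf1]; exact one_ne_zero)
  have hg1 : ∀ i x, ‖g i x‖ ≤ 1 := fun i x => by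
    rw [Real.norm_of_nonneg (hg i x).1]; exact (hg i x).2.trans hε
  have hgf : ∀ i, Integrable (fun x => g i x * f x) μ := fun i =>
    hf.bdd_mul (hgm i) (.of_forall (hg1 i))
  have hprod : Integrable (fun x => (∏ i, (1 - g i x)) * f x) μ := by
    refine hf.bdd_mul (c := 1) (by fun_prop) (.of_forall fun x => ?_)
    rw [norm_prod]
    exact Finset.prod_le_one (fun _ _ => norm_nonneg _) fun i _ => by
      rw [Real.norm_of_nonneg (by linarith [(hg i x).2, hε])]; linarith [(hg i x).1]
  have hsum : Integrable (fun x => ∑ i, g i x * f x) μ := integrable_finsetSum _ fun i _ => hgf i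
  have hlin : Integrable (fun x => (1 - ∑ i, g i x) * f x) μ := by
    simp_rw [sub_mul, one_mul, Finset.sum_mul]
    exact hf.sub hsum
  have hexpand : 1 - ∑ i, ∫ x, g i x * f x ∂μ = ∫ x, (1 - ∑ i, g i x) * f x ∂μ := by
    simp_rw [sub_mul, one_mul, Finset.sum_mul]
    rw [integral_sub hf hsum, integral_finsetSum _ fun i _ => hgf i, hf1]
  rw [hexpand]
  have hpointwise : ∀ x, ‖(∏ i, (1 - g i x) - (1 - ∑ i, g i x)) * f x‖
      ≤ 2 ^ Fintype.card ι * ε ^ 2 * f x := fun x => by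
    rw [norm_mul, Real.norm_of_nonneg (hf0 x)]
    exact mul_le_mul_of_nonneg_right
      (abs_prod_one_sub_sub_one_sub_sum_le _ (fun i _ => hg i x) hε) (hf0 x)
  calc |∫ x, (∏ i, (1 - g i x)) * f x ∂μ - ∫ x, (1 - ∑ i, g i x) * f x ∂μ|
      = ‖∫ x, (∏ i, (1 - g i x) - (1 - ∑ i, g i x)) * f x ∂μ‖ := by
        rw [Real.norm_eq_abs, ← integral_sub hprod hlin]
        simp_rw [sub_mul]
    _ ≤ ∫ x, 2 ^ Fintype.card ι * ε ^ 2 * f x ∂μ :=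
        norm_integral_le_of_norm_le (hf.const_mul _) (.of_forall hpointwise)
    _ = 2 ^ Fintype.card ι * ε ^ 2 := by rw [integral_const_mul, hf1, mul_one]

theorem exp_neg_mul_rpow_add_sq_le {lam h r a : ℝ} (hlam : 0 ≤ lam) (hh : 0 ≤ h) (hr : 0 ≤ r)
    (ha : 0 ≤ a) : exp (-lam * (a + h ^ 2) ^ (r / 2)) ≤ exp (-lam * h ^ r) := by
  have hpow : h ^ r = (h ^ 2) ^ (r / 2) := by
    rw [← Real.rpow_natCast, ← Real.rpow_mul hh]; ring_nf
  rw [exp_le_exp, hpow, neg_mul, neg_mul, neg_le_neg_iff]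
  gcongr
  linarith

theorem stmt_8_general (d n : ℕ) (lam h r : ℝ) (hlam : 0 < lam) (hh : 0 ≤ h) (hr : 0 < r)
    (f : EuclideanSpace ℝ (Fin d) → ℝ)
    (hf0 : ∀ x, 0 ≤ f x) (hf1 : ∫ x, f x = 1)
    (u : Fin n → EuclideanSpace ℝ (Fin d)) :
    |(∫ x, (∏ i, (1 - Real.exp (-lam * ((‖x - u i‖ ^ 2 + h ^ 2) ^ (r / 2))))) * f x)
      - (1 - ∑ i, ∫ x, Real.exp (-lam * ((‖x - u i‖ ^ 2 + h ^ 2) ^ (r / 2))) * f x)|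
      ≤ 2 ^ n * Real.exp (-2 * lam * h ^ r) := by
  have hε : exp (-lam * h ^ r) ≤ 1 :=
    exp_le_one_iff.2 (by nlinarith [Real.rpow_nonneg hh r])
  have hg : ∀ i x,
      exp (-lam * ((‖x - u i‖ ^ 2 + h ^ 2) ^ (r / 2))) ∈ Set.Icc 0 (exp (-lam * h ^ r)) :=
    fun i x => ⟨(exp_pos _).le, exp_neg_mul_rpow_add_sq_le hlam.le hh hr.le (sq_nonneg _)⟩
  calc _ ≤ 2 ^ Fintype.card (Fin n) * exp (-lam * h ^ r) ^ 2 :=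
        abs_integral_prod_one_sub_mul_sub_le (fun i => by fun_prop (disch := positivity))
          hg hε hf0 hf1
    _ = 2 ^ n * exp (-2 * lam * h ^ r) := by
        rw [Fintype.card_fin, ← exp_nat_mul]; ring_nf

/-- The outage probability differs from its first-order expansion
`1 - Σᵢ ∫ g(x,uᵢ) f(x) dx` by at most `2ⁿ e^{-2λh^r}`. -/
theorem stmt_8 (d n : ℕ) (hn : 1 ≤ n) (lam h r : ℝ) (hlam : 0 < lam) (hh : 0 ≤ h) (hr : 0 < r)
    (f : EuclideanSpace ℝ (Fin d) → ℝ) (hfm : Measurable f)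
    (hf0 : ∀ x, 0 ≤ f x) (hf1 : ∫ x, f x = 1)
    (u : Fin n → EuclideanSpace ℝ (Fin d)) :
    |(∫ x, (∏ i, (1 - Real.exp (-lam * ((‖x - u i‖ ^ 2 + h ^ 2) ^ (r / 2))))) * f x)
      - (1 - ∑ i, ∫ x, Real.exp (-lam * ((‖x - u i‖ ^ 2 + h ^ 2) ^ (r / 2))) * f x)|
      ≤ 2 ^ n * Real.exp (-2 * lam * h ^ r) :=
  stmt_8_general d n lam h r hlam hh hr f hf0 hf1 u
end

section
/- Let w : ℝ^d × ℝ^d → [0,1] depend only on the distance: w(x,u) = W(‖x-u‖) for some function W. Let f be a probability density on ℝ that is unimodal with center μ, and assume W is non-increasing and nonnegative. Then u = μ maximizes u ↦ ∫ w(x,u) f(x) dx over ℝ. -/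
/-!
Write `f x = ψ |x - μ|` with `ψ r = f (μ + r)`. Reflecting about `(u + μ) / 2` swaps the
distances `a = |x - u|` and `b = |x - μ|`, and translating by `μ - u` moves one centre onto the
other, so
  `2 ∫ W |x - u| ψ |x - μ| = ∫ (W a ψ b + W b ψ a)`,
  `2 ∫ W |x - μ| ψ |x - μ| = ∫ (W a ψ a + W b ψ b)`.
Since `W` and `ψ` are both antitone on `[0, ∞)`, the rearrangement inequality compares the
integrands pointwise.
-/

open MeasureTheory Set

lemma apply_eq_apply_add_abs_sub {f : ℝ → ℝ} {μ : ℝ}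
    (hsym : ∀ c, f (μ + c) = f (μ - c)) (x : ℝ) : f x = f (μ + |x - μ|) := by
  rcases le_total μ x with h | h
  · rw [abs_of_nonneg (sub_nonneg.2 h), add_sub_cancel]
  · rw [abs_of_nonpos (sub_nonpos.2 h), hsym, sub_neg_eq_add, add_sub_cancel]

lemma AntitoneOn.measurable_comp_abs {φ : ℝ → ℝ} (hφ : AntitoneOn φ (Ici 0)) :
    Measurable fun t => φ |t| := by
  have hext : Antitone fun t => φ (max t 0) := fun s t hst =>
    hφ (le_max_right s 0) (le_max_right t 0) (max_le_max_right 0 hst)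
  have hcomp : (fun t => φ |t|) = (fun t => φ (max t 0)) ∘ abs :=
    funext fun t => by rw [Function.comp_apply, max_eq_left (abs_nonneg t)]
  exact hcomp ▸ hext.measurable.comp measurable_abs

lemma integrable_comp_abs_sub_mul {φ g : ℝ → ℝ} (hφ0 : ∀ s, 0 ≤ s → 0 ≤ φ s)
    (hφ : AntitoneOn φ (Ici 0)) (hg : Integrable g) (u : ℝ) :
    Integrable fun x => φ |x - u| * g x :=
  hg.bdd_mul (c := φ 0)
    (hφ.measurable_comp_abs.comp (measurable_sub_const u)).aestronglyMeasurable
    (ae_of_all _ fun x => by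
      rw [Real.norm_of_nonneg (hφ0 _ (abs_nonneg _))]
      exact hφ self_mem_Ici (mem_Ici.2 (abs_nonneg _)) (abs_nonneg _))

theorem integral_comp_abs_sub_mul_le {φ ψ : ℝ → ℝ} (hφ : AntitoneOn φ (Ici 0))
    (hψ : AntitoneOn ψ (Ici 0)) {u μ : ℝ}
    (hoff : Integrable fun x => φ |x - u| * ψ |x - μ|)
    (hon : Integrable fun x => φ |x - μ| * ψ |x - μ|) :
    ∫ x, φ |x - u| * ψ |x - μ| ≤ ∫ x, φ |x - μ| * ψ |x - μ| := by
  have hreflect : ∀ x, |u + μ - x - u| = |x - μ| ∧ |u + μ - x - μ| = |x - u| := fun x =>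
    ⟨by rw [abs_sub_comm]; ring_nf, by rw [abs_sub_comm]; ring_nf⟩
  have hshift : ∀ x, x + (μ - u) - μ = x - u := fun x => by ring
  have hoff' : Integrable fun x => φ |x - μ| * ψ |x - u| := by
    simpa only [hreflect] using hoff.comp_sub_left (u + μ)
  have hon' : Integrable fun x => φ |x - u| * ψ |x - u| := by
    simpa only [hshift] using hon.comp_add_right (μ - u)
  have hoff_eq : ∫ x, φ |x - μ| * ψ |x - u| = ∫ x, φ |x - u| * ψ |x - μ| := by
    simpa only [hreflect] using
      integral_sub_left_eq_self (fun x => φ |x - u| * ψ |x - μ|) volume (u + μ)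
  have hon_eq : ∫ x, φ |x - u| * ψ |x - u| = ∫ x, φ |x - μ| * ψ |x - μ| := by
    simpa only [hshift] using
      integral_add_right_eq_self (fun x => φ |x - μ| * ψ |x - μ|) (μ - u)
  have hsum : ∫ x, (φ |x - u| * ψ |x - μ| + φ |x - μ| * ψ |x - u|) ≤
      ∫ x, (φ |x - u| * ψ |x - u| + φ |x - μ| * ψ |x - μ|) :=
    integral_mono (hoff.add hoff') (hon'.add hon) fun x =>
      (hφ.monovaryOn hψ).mul_add_mul_le_mul_add_mul (abs_nonneg (x - u)) (abs_nonneg (x - μ))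
  simp only [integral_add hoff hoff', integral_add hon' hon, hoff_eq, hon_eq] at hsum
  linarith

theorem stmt_16_general (W : ℝ → ℝ) (hW0 : ∀ s, 0 ≤ W s)
    (hWanti : AntitoneOn W (Set.Ici 0))
    (f : ℝ → ℝ) (μ : ℝ) (hf1 : ∫ x, f x = 1)
    (hanti : AntitoneOn f (Set.Ici μ))
    (hsym : ∀ c : ℝ, f (μ + c) = f (μ - c)) :
    ∀ u : ℝ, ∫ x, W |x - u| * f x ≤ ∫ x, W |x - μ| * f x := by
  intro u
  have hf : Integrable f := .of_integral_ne_zero (by rw [hf1]; exact one_ne_zero)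
  have hprofile : AntitoneOn (fun r => f (μ + r)) (Ici 0) := fun r hr s hs hrs =>
    hanti (mem_Ici.2 (le_add_of_nonneg_right hr)) (mem_Ici.2 (le_add_of_nonneg_right hs))
      (add_le_add_right hrs μ)
  have hcentered : ∀ v, (fun x => W |x - v| * f x) = fun x => W |x - v| * f (μ + |x - μ|) :=
    fun v => funext fun x => by rw [← apply_eq_apply_add_abs_sub hsym]
  have hint : ∀ v, Integrable fun x => W |x - v| * f (μ + |x - μ|) := fun v =>
    hcentered v ▸ integrable_comp_abs_sub_mul (fun s _ => hW0 s) hWanti hf v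
  rw [hcentered u, hcentered μ]
  exact integral_comp_abs_sub_mul_le hWanti hprofile (hint u) (hint μ)

/-- If the success probability kernel `w(x,u) = W(|x-u|)` takes values
in `[0,1]` and `W` is nonnegative and non-increasing, then the center `μ` of a
unimodal density `f` maximizes `u ↦ ∫ w(x,u) f(x) dx`. -/
theorem stmt_16 (W : ℝ → ℝ) (hW0 : ∀ s, 0 ≤ W s) (hW1 : ∀ s, W s ≤ 1)
    (hWanti : AntitoneOn W (Set.Ici 0))
    (f : ℝ → ℝ) (μ : ℝ) (hf0 : ∀ x, 0 ≤ f x) (hf1 : ∫ x, f x = 1)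
    (hmono : MonotoneOn f (Set.Iic μ)) (hanti : AntitoneOn f (Set.Ici μ))
    (hsym : ∀ c : ℝ, f (μ + c) = f (μ - c)) :
    ∀ u : ℝ, ∫ x, W |x - u| * f x ≤ ∫ x, W |x - μ| * f x :=
  stmt_16_general W hW0 hWanti f μ hf1 hanti hsym
end
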